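/- arXiv:1802.03569 — 2 statements merged into one kernel-verified Lean document; each statement's English description precedes it below -/
import Mathlib

section
/- For every real inner product space H, every finite family of unit vectors x_1, …, x_N in H, and every family of real coefficients c_1, …, c_N with ∑_{i=1}^N c_i = 0, one has ∑_{i=1}^N ∑_{j=1}^N c_i c_j · arccos(⟪x_i, x_j⟫) ≤ 0; that is, the geodesic distance (x, z) ↦ arccos(⟪x, z⟫) is a negative definite kernel on the unit sphere of H. -/
/-!
Since `arccos = π / 2 - arcsin` and `∑ i, c i = 0`, it suffices that `arcsin ⟪x, z⟫` is a
positive semidefinite kernel. The Taylor series of `arcsin` has the nonnegative coefficients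
`(2n choose n) / (4 ^ n (2n + 1))`, and by the Schur product theorem every entrywise power of a
Gram matrix is positive semidefinite; this gives the claim termwise for vectors in the open unit
ball, and continuity extends it to the sphere. The series is identified with `arcsin` through the
series `f` of `(1 - u) ^ (-1/2)`: it satisfies `2 (1 - u) f' = f`, so `f u * √(1 - u)` is constant.
-/

open Real Set Matrix
open scoped RealInnerProductSpace

theorem hasDerivAt_tsum_of_abs_le {g g' : ℕ → ℝ → ℝ} {t : ℝ} (ht : |t| < 1)
    (hg : ∀ n y, HasDerivAt (g n) (g' n y) y)
    (hg' : ∀ n y r, |y| ≤ r → |g' n y| ≤ g' n r)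
    (hsum' : ∀ r, 0 ≤ r → r < 1 → Summable fun n ↦ g' n r)
    (hsum : Summable fun n ↦ g n t) :
    HasDerivAt (fun y ↦ ∑' n, g n y) (∑' n, g' n t) t := by
  obtain ⟨r, htr, hr1⟩ := exists_between ht
  have ht' : t ∈ Ioo (-r) r := abs_lt.1 htr
  exact hasDerivAt_tsum_of_isPreconnected (hsum' r ((abs_nonneg t).trans htr.le) hr1)
    isOpen_Ioo isPreconnected_Ioo (fun n y _ ↦ hg n y)
    (fun n y hy ↦ hg' n y r (abs_le.2 ⟨hy.1.le, hy.2.le⟩)) ht' hsum ht'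

theorem summable_mul_pow_of_abs_le_one {b : ℕ → ℝ} (hb : ∀ n, |b n| ≤ 1) {u : ℝ}
    (hu : |u| < 1) : Summable fun n ↦ b n * u ^ n :=
  Summable.of_norm_bounded (summable_geometric_of_lt_one (abs_nonneg u) hu) fun n ↦ by
    rw [norm_mul, norm_pow, Real.norm_eq_abs, Real.norm_eq_abs]
    exact mul_le_of_le_one_left (by positivity) (hb n)

theorem summable_natCast_mul_pow_sub_one {r : ℝ} (hr : |r| < 1) :
    Summable fun n : ℕ ↦ (n : ℝ) * r ^ (n - 1) := by
  rw [← summable_nat_add_iff 1]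
  have hr' : ‖r‖ < 1 := by rwa [Real.norm_eq_abs]
  simpa [add_mul] using
    (summable_pow_mul_geometric_of_norm_lt_one 1 hr').add (summable_geometric_of_norm_lt_one hr')

/-- The Taylor coefficients `(2n choose n) / 4 ^ n` of `(1 - u) ^ (-1/2)`. -/
noncomputable def invSqrtCoeff : ℕ → ℝ
  | 0 => 1
  | n + 1 => (2 * n + 1) / (2 * n + 2) * invSqrtCoeff n

theorem invSqrtCoeff_pos : ∀ n, 0 < invSqrtCoeff n
  | 0 => one_pos
  | n + 1 => mul_pos (by positivity) (invSqrtCoeff_pos n)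

theorem invSqrtCoeff_le_one : ∀ n, invSqrtCoeff n ≤ 1
  | 0 => le_rfl
  | n + 1 => mul_le_one₀ (div_le_one_of_le₀ (by linarith) (by positivity))
      (invSqrtCoeff_pos n).le (invSqrtCoeff_le_one n)

theorem abs_invSqrtCoeff_le_one (n : ℕ) : |invSqrtCoeff n| ≤ 1 := by
  rw [abs_of_pos (invSqrtCoeff_pos n)]
  exact invSqrtCoeff_le_one n

theorem two_mul_succ_mul_invSqrtCoeff_succ (n : ℕ) :
    2 * (n + 1) * invSqrtCoeff (n + 1) = (2 * n + 1) * invSqrtCoeff n := by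
  rw [invSqrtCoeff]
  field_simp

noncomputable def invSqrtSeries (u : ℝ) : ℝ := ∑' n, invSqrtCoeff n * u ^ n

theorem invSqrtSeries_zero : invSqrtSeries 0 = 1 := by
  rw [invSqrtSeries, tsum_eq_single 0 fun n hn ↦ by simp [hn]]
  simp [invSqrtCoeff]

theorem summable_invSqrtCoeff_mul_natCast_mul_pow {u : ℝ} (hu : |u| < 1) :
    Summable fun n : ℕ ↦ invSqrtCoeff n * (n * u ^ (n - 1)) :=
  Summable.of_norm_bounded (summable_natCast_mul_pow_sub_one (by rwa [abs_abs])) fun n ↦ by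
    rw [Real.norm_eq_abs, abs_mul, abs_mul, abs_of_pos (invSqrtCoeff_pos n), Nat.abs_cast, abs_pow]
    exact mul_le_of_le_one_left (by positivity) (invSqrtCoeff_le_one n)

theorem hasDerivAt_invSqrtSeries {u : ℝ} (hu : |u| < 1) :
    HasDerivAt invSqrtSeries (∑' n : ℕ, invSqrtCoeff n * (n * u ^ (n - 1))) u := by
  refine hasDerivAt_tsum_of_abs_le hu (fun n y ↦ (hasDerivAt_pow n y).const_mul _)
    (fun n y r hyr ↦ ?_) (fun r hr0 hr1 ↦ summable_invSqrtCoeff_mul_natCast_mul_pow ?_)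
    (summable_mul_pow_of_abs_le_one abs_invSqrtCoeff_le_one hu)
  · rw [abs_mul, abs_mul, abs_of_pos (invSqrtCoeff_pos n), Nat.abs_cast, abs_pow]
    have := invSqrtCoeff_pos n
    gcongr
  · rwa [abs_of_nonneg hr0]

theorem hasSum_invSqrtSeries {u : ℝ} (hu : |u| < 1) :
    HasSum (fun n ↦ invSqrtCoeff n * u ^ n)
      (2 * (1 - u) * ∑' n : ℕ, invSqrtCoeff n * (n * u ^ (n - 1))) := by
  set T : ℕ → ℝ := fun n ↦ invSqrtCoeff n * (n * u ^ (n - 1))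
  have hT : HasSum T (∑' n, T n) := (summable_invSqrtCoeff_mul_natCast_mul_pow hu).hasSum
  have hshift : HasSum (fun n ↦ T (n + 1)) (∑' n, T n) := by
    simpa [T] using (hasSum_nat_add_iff' 1).2 hT
  have hcomb := (hshift.mul_left 2).sub (hT.mul_left (2 * u))
  rw [show 2 * (1 - u) * ∑' n, T n = 2 * ∑' n, T n - 2 * u * ∑' n, T n by ring]
  refine hcomb.congr_fun fun n ↦ ?_
  have hpow : u * (n * u ^ (n - 1)) = n * u ^ n := by
    rcases n with _ | n
    · simp
    · simp [pow_succ]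
      ring
  simp only [T, Nat.cast_add_one, Nat.add_sub_cancel]
  linear_combination 2 * invSqrtCoeff n * hpow - u ^ n * two_mul_succ_mul_invSqrtCoeff_succ n

theorem invSqrtSeries_mul_sqrt_one_sub {u : ℝ} (hu : |u| < 1) :
    invSqrtSeries u * √(1 - u) = 1 := by
  have hderiv : ∀ y ∈ Ioo (-1 : ℝ) 1,
      HasDerivAt (fun y ↦ invSqrtSeries y * √(1 - y)) 0 y := by
    intro y hy
    have hy' : |y| < 1 := abs_lt.2 hy
    have h1 : 0 < 1 - y := by linarith [hy.2]
    have h := (hasDerivAt_invSqrtSeries hy').mul (((hasDerivAt_id' y).const_sub 1).sqrt h1.ne')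
    refine h.congr_deriv ?_
    rw [invSqrtSeries, (hasSum_invSqrtSeries hy').tsum_eq]
    field_simp
    rw [Real.sq_sqrt h1.le]
    ring
  have h0 : (0 : ℝ) ∈ Ioo (-1) 1 := by norm_num
  have := isOpen_Ioo.is_const_of_deriv_eq_zero isPreconnected_Ioo
    (fun y hy ↦ (hderiv y hy).differentiableAt.differentiableWithinAt)
    (fun y hy ↦ (hderiv y hy).deriv) (abs_lt.1 hu) h0
  simpa [invSqrtSeries_zero] using this

theorem invSqrtSeries_eq_inv_sqrt {u : ℝ} (hu : |u| < 1) : invSqrtSeries u = 1 / √(1 - u) :=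
  eq_one_div_of_mul_eq_one_left (invSqrtSeries_mul_sqrt_one_sub hu)

noncomputable def arcsinCoeff (n : ℕ) : ℝ := invSqrtCoeff n / (2 * n + 1)

theorem arcsinCoeff_nonneg (n : ℕ) : 0 ≤ arcsinCoeff n :=
  div_nonneg (invSqrtCoeff_pos n).le (by positivity)

theorem summable_arcsinCoeff_mul_pow {t : ℝ} (ht : |t| < 1) :
    Summable fun n ↦ arcsinCoeff n * t ^ (2 * n + 1) := by
  have hcoeff (n : ℕ) : |arcsinCoeff n| ≤ 1 := by
    rw [abs_of_nonneg (arcsinCoeff_nonneg n)]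
    exact div_le_one_of_le₀ ((invSqrtCoeff_le_one n).trans (by linarith [n.cast_nonneg (α := ℝ)]))
      (by positivity)
  have ht2 : |t ^ 2| < 1 := by rw [abs_pow]; exact pow_lt_one₀ (abs_nonneg t) ht two_ne_zero
  exact ((summable_mul_pow_of_abs_le_one hcoeff ht2).mul_left t).congr fun n ↦ by ring

theorem hasDerivAt_arcsinSeries {t : ℝ} (ht : |t| < 1) :
    HasDerivAt (fun t ↦ ∑' n, arcsinCoeff n * t ^ (2 * n + 1)) (invSqrtSeries (t ^ 2)) t := by
  refine hasDerivAt_tsum_of_abs_le (g' := fun n t ↦ invSqrtCoeff n * (t ^ 2) ^ n) ht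
    (fun n y ↦ ?_) (fun n y r hyr ↦ ?_) (fun r hr0 hr1 ↦ ?_) (summable_arcsinCoeff_mul_pow ht)
  · refine ((hasDerivAt_pow (2 * n + 1) y).const_mul (arcsinCoeff n)).congr_deriv ?_
    rw [arcsinCoeff, Nat.add_sub_cancel, pow_mul]
    push_cast
    field_simp
  · rw [abs_mul, abs_of_pos (invSqrtCoeff_pos n), abs_pow, abs_pow]
    have := invSqrtCoeff_pos n
    gcongr
  · refine summable_mul_pow_of_abs_le_one abs_invSqrtCoeff_le_one ?_
    rw [abs_pow, abs_of_nonneg hr0]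
    exact pow_lt_one₀ hr0 hr1 two_ne_zero

theorem hasSum_arcsin {t : ℝ} (ht : |t| < 1) :
    HasSum (fun n ↦ arcsinCoeff n * t ^ (2 * n + 1)) (arcsin t) := by
  convert (summable_arcsinCoeff_mul_pow ht).hasSum
  have hderiv : ∀ y ∈ Ioo (-1 : ℝ) 1,
      HasDerivAt arcsin (invSqrtSeries (y ^ 2)) y ∧
      HasDerivAt (fun t ↦ ∑' n, arcsinCoeff n * t ^ (2 * n + 1)) (invSqrtSeries (y ^ 2)) y := by
    intro y hy
    have hy' : |y| < 1 := abs_lt.2 hy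
    have hy2 : |y ^ 2| < 1 := by rw [abs_pow]; exact pow_lt_one₀ (abs_nonneg y) hy' two_ne_zero
    refine ⟨?_, hasDerivAt_arcsinSeries hy'⟩
    rw [invSqrtSeries_eq_inv_sqrt hy2]
    exact hasDerivAt_arcsin hy.1.ne' hy.2.ne
  have h0 : (0 : ℝ) ∈ Ioo (-1) 1 := by norm_num
  refine isOpen_Ioo.eqOn_of_deriv_eq isPreconnected_Ioo
    (fun y hy ↦ (hderiv y hy).1.differentiableAt.differentiableWithinAt)
    (fun y hy ↦ (hderiv y hy).2.differentiableAt.differentiableWithinAt)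
    (fun y hy ↦ ((hderiv y hy).1.deriv.trans (hderiv y hy).2.deriv.symm)) h0 (by simp) (abs_lt.1 ht)

section Kernel

variable {ι E : Type*} [Fintype ι] [NormedAddCommGroup E] [InnerProductSpace ℝ E]

theorem Matrix.posSemidef_inner_pow (x : ι → E) (k : ℕ) :
    (of fun i j ↦ ⟪x i, x j⟫ ^ k).PosSemidef := by
  induction k with
  | zero =>
    have h : (of fun i j ↦ ⟪x i, x j⟫ ^ 0) = gram ℝ fun _ : ι ↦ (1 : ℝ) := by ext; simp
    exact h ▸ posSemidef_gram ℝ _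
  | succ k ih =>
    have h : (of fun i j ↦ ⟪x i, x j⟫ ^ (k + 1)) = (of fun i j ↦ ⟪x i, x j⟫ ^ k) ⊙ gram ℝ x := by
      ext; simp [pow_succ]
    exact h ▸ ih.hadamard (posSemidef_gram ℝ x)

theorem Matrix.PosSemidef.sum_mul_mul_nonneg {M : Matrix ι ι ℝ} (hM : M.PosSemidef)
    (c : ι → ℝ) : 0 ≤ ∑ i, ∑ j, c i * c j * M i j := by
  have := hM.dotProduct_mulVec_nonneg c
  simpa [dotProduct, mulVec, Finset.mul_sum, mul_comm, mul_left_comm] using this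

theorem sum_mul_mul_nonneg_of_hasSum_inner_pow {F : ℝ → ℝ} {α : ℕ → ℝ} {e : ℕ → ℕ}
    (hα : ∀ n, 0 ≤ α n) (x : ι → E)
    (hF : ∀ i j, HasSum (fun n ↦ α n * ⟪x i, x j⟫ ^ e n) (F ⟪x i, x j⟫)) (c : ι → ℝ) :
    0 ≤ ∑ i, ∑ j, c i * c j * F ⟪x i, x j⟫ := by
  have hsum : HasSum (fun n ↦ α n * ∑ i, ∑ j, c i * c j * ⟪x i, x j⟫ ^ e n)
      (∑ i, ∑ j, c i * c j * F ⟪x i, x j⟫) := by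
    simp only [Finset.mul_sum]
    refine hasSum_sum fun i _ ↦ hasSum_sum fun j _ ↦ ?_
    simpa only [mul_left_comm] using (hF i j).mul_left (c i * c j)
  exact hsum.nonneg fun n ↦
    mul_nonneg (hα n) ((posSemidef_inner_pow x (e n)).sum_mul_mul_nonneg c)

theorem sum_mul_mul_arcsin_inner_nonneg_of_norm_lt_one (x : ι → E) (hx : ∀ i, ‖x i‖ < 1)
    (c : ι → ℝ) : 0 ≤ ∑ i, ∑ j, c i * c j * arcsin ⟪x i, x j⟫ :=
  sum_mul_mul_nonneg_of_hasSum_inner_pow arcsinCoeff_nonneg x (fun i j ↦ hasSum_arcsin <|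
    (abs_real_inner_le_norm _ _).trans_lt
      (mul_lt_one_of_nonneg_of_lt_one_left (norm_nonneg _) (hx i) (hx j).le)) c

/-- Shrinking the vectors by `r < 1` brings the Gram entries into the disc of convergence of the
`arcsin` series; then let `r → 1`. -/
theorem sum_mul_mul_arcsin_inner_nonneg (x : ι → E) (hx : ∀ i, ‖x i‖ ≤ 1) (c : ι → ℝ) :
    0 ≤ ∑ i, ∑ j, c i * c j * arcsin ⟪x i, x j⟫ := by
  set Q : ℝ → ℝ := fun r ↦ ∑ i, ∑ j, c i * c j * arcsin ⟪r • x i, r • x j⟫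
  have hQ : Continuous Q := by fun_prop
  have hQ_nonneg : Ico 0 1 ⊆ {r | 0 ≤ Q r} := fun r hr ↦
    sum_mul_mul_arcsin_inner_nonneg_of_norm_lt_one _ (fun i ↦ by
      rw [norm_smul, Real.norm_of_nonneg hr.1]
      exact mul_lt_one_of_nonneg_of_lt_one_left hr.1 hr.2 (hx i)) c
  have h1 : (1 : ℝ) ∈ closure (Ico 0 1) := by rw [closure_Ico zero_ne_one]; simp
  simpa [Q] using closure_minimal hQ_nonneg (isClosed_le continuous_const hQ) h1

end Kernel

/-- The geodesic distance `(x, z) ↦ arccos ⟪x, z⟫` is a negative definite kernel on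
the unit sphere of any real inner product space. -/
theorem arccos_neg_def_on_sphere
    {H : Type*} [NormedAddCommGroup H] [InnerProductSpace ℝ H]
    (N : ℕ) (x : Fin N → H) (hx : ∀ i, ‖x i‖ = 1)
    (c : Fin N → ℝ) (hc : ∑ i, c i = 0) :
    ∑ i, ∑ j, c i * c j * Real.arccos ⟪x i, x j⟫ ≤ 0 := by
  have hconst : ∑ i, ∑ j, c i * c j * (π / 2) = 0 := by
    simp [← Finset.sum_mul, ← Finset.mul_sum, hc]
  have harcsin := sum_mul_mul_arcsin_inner_nonneg x (fun i ↦ (hx i).le) c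
  simp only [arccos_eq_pi_div_two_sub_arcsin, mul_sub, Finset.sum_sub_distrib, hconst]
  linarith
end

section
/- Let (Ω, μ) be a measure space and let t > 0 be a real number. For probability densities ρ, ρ' on (Ω, μ), define the Persistence Fisher kernel k_PF(ρ, ρ') = exp(-t · arccos(∫ √(ρ(x) ρ'(x)) dμ(x))). Then k_PF is a positive definite kernel on the set of probability densities: for every finite family of probability densities ρ_1, …, ρ_N on (Ω, μ) and every family of real coefficients c_1, …, c_N, one has ∑_{i=1}^N ∑_{j=1}^N c_i c_j k_PF(ρ_i, ρ_j) ≥ 0. -/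
/-!
Each `√ρᵢ` is a unit vector of `L²(μ)` and `∫ √(ρᵢ ρⱼ) dμ = ⟪√ρᵢ, √ρⱼ⟫`, so the matrix of these
integrals is a Gram matrix. Since `arccos = π/2 - arcsin`, the kernel matrix is a positive multiple
of the entrywise exponential of `t • arcsin` applied to that Gram matrix. By the Schur product
theorem entrywise powers of a positive semidefinite matrix are positive semidefinite, and these
matrices form a closed convex cone, so the same holds for the entrywise image under any power
series with nonnegative coefficients, such as those of `arcsin` and `exp`.
-/

open MeasureTheory Filter Topology Set
open scoped InnerProductSpace

theorem Ring.multichoose_pos {R : Type*} [CommRing R] [LinearOrder R] [IsStrictOrderedRing R]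
    [BinomialRing R] {r : R} (hr : 0 < r) (n : ℕ) : 0 < Ring.multichoose r n := by
  have h := Ring.factorial_nsmul_multichoose_eq_ascPochhammer r n
  rw [Polynomial.ascPochhammer_smeval_eq_eval, nsmul_eq_mul] at h
  exact pos_of_mul_pos_right (h ▸ ascPochhammer_pos n r hr) (by positivity)

namespace Real

theorem hasSum_one_div_sqrt_one_sub {x : ℝ} (hx : |x| < 1) :
    HasSum (fun n ↦ Ring.multichoose (1 / 2 : ℝ) n * x ^ n) (1 / √(1 - x)) := by
  have hx' : x ∈ Metric.eball (0 : ℝ) 1 := by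
    simpa [Metric.mem_eball, edist_dist, Real.dist_eq] using hx
  simpa [Ring.multichoose_eq, Real.sqrt_eq_rpow, mul_comm] using
    (one_div_one_sub_rpow_hasFPowerSeriesOnBall_zero (1 / 2)).hasSum hx'

theorem abs_le_abs_of_mem_uIcc_zero {s x : ℝ} (hx : x ∈ uIcc 0 s) : |x| ≤ |s| := by
  simpa using abs_sub_left_of_mem_uIcc hx

theorem integral_one_div_sqrt_one_sub_sq {s : ℝ} (hs : |s| < 1) :
    ∫ x in (0 : ℝ)..s, 1 / √(1 - x ^ 2) = arcsin s := by
  have hlt : ∀ x ∈ uIcc 0 s, |x| < 1 := fun x hx ↦ (abs_le_abs_of_mem_uIcc_zero hx).trans_lt hs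
  have hderiv : ∀ x ∈ uIcc 0 s, HasDerivAt arcsin (1 / √(1 - x ^ 2)) x := fun x hx ↦
    have := abs_lt.mp (hlt x hx)
    hasDerivAt_arcsin (by linarith) (by linarith)
  have hcont : ContinuousOn (fun x : ℝ ↦ 1 / √(1 - x ^ 2)) (uIcc 0 s) := by
    refine continuousOn_const.div (by fun_prop) fun x hx ↦ ?_
    have := sq_lt_one_iff_abs_lt_one x |>.mpr (hlt x hx)
    positivity
  rw [intervalIntegral.integral_eq_sub_of_hasDerivAt hderiv hcont.intervalIntegrable, arcsin_zero,
    sub_zero]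

theorem hasSum_arcsin {s : ℝ} (hs : |s| < 1) :
    HasSum (fun n ↦ Ring.multichoose (1 / 2 : ℝ) n / (2 * n + 1) * s ^ (2 * n + 1)) (arcsin s) := by
  have hle : ∀ x ∈ uIoc 0 s, |x| ≤ |s| := fun x hx ↦
    abs_le_abs_of_mem_uIcc_zero (uIoc_subset_uIcc hx)
  have hc := Ring.multichoose_pos (one_half_pos (α := ℝ))
  have hterm : ∀ x, |x| < 1 → HasSum (fun n ↦ Ring.multichoose (1 / 2 : ℝ) n * (x ^ 2) ^ n)
      (1 / √(1 - x ^ 2)) := fun x hx ↦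
    hasSum_one_div_sqrt_one_sub (by rwa [abs_pow, sq_lt_one_iff₀ (abs_nonneg x)])
  have hsum := intervalIntegral.hasSum_integral_of_dominated_convergence (μ := volume)
    (F := fun n x ↦ Ring.multichoose (1 / 2 : ℝ) n * (x ^ 2) ^ n)
    (fun n _ ↦ Ring.multichoose (1 / 2 : ℝ) n * (s ^ 2) ^ n)
    (fun n ↦ by fun_prop)
    (fun n ↦ .of_forall fun x hx ↦ by
      rw [Real.norm_of_nonneg (by have := hc n; positivity)]
      exact mul_le_mul_of_nonneg_left
        (pow_le_pow_left₀ (sq_nonneg x) (sq_le_sq.mpr (hle x hx)) n) (hc n).le)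
    (.of_forall fun _ _ ↦ (hterm s hs).summable)
    intervalIntegrable_const
    (.of_forall fun x hx ↦ hterm x ((hle x hx).trans_lt hs))
  rw [integral_one_div_sqrt_one_sub_sq hs] at hsum
  have hint : ∀ n : ℕ, ∫ x in (0 : ℝ)..s, Ring.multichoose (1 / 2 : ℝ) n * (x ^ 2) ^ n =
      Ring.multichoose (1 / 2 : ℝ) n / (2 * n + 1) * s ^ (2 * n + 1) := fun n ↦ by
    simp_rw [intervalIntegral.integral_const_mul, ← pow_mul, integral_pow]
    push_cast
    ring
  simpa only [hint] using hsum

end Real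

namespace Matrix

variable {ι : Type*}

theorem isClosed_setOf_posSemidef : IsClosed {A : Matrix ι ι ℝ | A.PosSemidef} := by
  have hHerm : IsClosed {A : Matrix ι ι ℝ | A.IsHermitian} :=
    isClosed_eq continuous_id.matrix_conjTranspose continuous_id
  have hForm : ∀ x : ι →₀ ℝ, IsClosed {A : Matrix ι ι ℝ |
      0 ≤ x.sum fun i xi ↦ x.sum fun j xj ↦ star xi * A i j * xj} := fun x ↦
    isClosed_le continuous_const (by unfold Finsupp.sum; fun_prop)
  simpa only [PosSemidef, Set.ofPred_and, Set.ofPred_forall] using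
    hHerm.inter (isClosed_iInter hForm)

theorem PosSemidef.of_hasSum {B : ℕ → Matrix ι ι ℝ} {C : Matrix ι ι ℝ}
    (hB : ∀ n, (B n).PosSemidef) (hC : HasSum B C) : C.PosSemidef :=
  isClosed_setOf_posSemidef.mem_of_tendsto hC.tendsto_sum_nat <| .of_forall fun _ ↦
    posSemidef_sum _ fun n _ ↦ hB n

theorem PosSemidef.map_pow [Finite ι] {A : Matrix ι ι ℝ} (hA : A.PosSemidef) (n : ℕ) :
    (A.map (· ^ n)).PosSemidef := by
  induction n with
  | zero =>
    convert posSemidef_vecMulVec_self_star (fun _ : ι ↦ (1 : ℝ)) using 1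
    ext; simp [vecMulVec]
  | succ n ih =>
    have hmap : A.map (· ^ (n + 1)) = A.map (· ^ n) ⊙ A := by ext; simp [pow_succ]
    exact hmap ▸ ih.hadamard hA

theorem PosSemidef.map_of_hasSum [Finite ι] {A : Matrix ι ι ℝ} (hA : A.PosSemidef) {a : ℕ → ℝ}
    (ha : ∀ n, 0 ≤ a n) {k : ℕ → ℕ} {f : ℝ → ℝ}
    (hf : ∀ i j, HasSum (fun n ↦ a n * A i j ^ k n) (f (A i j))) : (A.map f).PosSemidef :=
  PosSemidef.of_hasSum (B := fun n ↦ a n • A.map (· ^ k n)) (fun n ↦ (hA.map_pow _).smul (ha n))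
    (Pi.hasSum.2 fun i ↦ Pi.hasSum.2 fun j ↦ by simpa using hf i j)

theorem PosSemidef.map_exp [Finite ι] {A : Matrix ι ι ℝ} (hA : A.PosSemidef) :
    (A.map Real.exp).PosSemidef :=
  hA.map_of_hasSum (a := fun n ↦ (n.factorial : ℝ)⁻¹) (k := id) (fun _ ↦ by positivity)
    fun i j ↦ by
      simpa [Real.exp_eq_exp_ℝ, div_eq_inv_mul] using NormedSpace.expSeries_div_hasSum_exp (A i j)

theorem PosSemidef.map_arcsin [Finite ι] {A : Matrix ι ι ℝ} (hA : A.PosSemidef)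
    (hA1 : ∀ i j, |A i j| ≤ 1) : (A.map Real.arcsin).PosSemidef := by
  -- The arcsin series converges only on the open interval `|x| < 1`; approach `A` by `r • A`.
  have hscaled : ∀ r ∈ Ioo (0 : ℝ) 1, ((r • A).map Real.arcsin).PosSemidef := fun r hr ↦
    (hA.smul hr.1.le).map_of_hasSum
      (fun n ↦ by have := Ring.multichoose_pos (one_half_pos (α := ℝ)) n; positivity)
      fun i j ↦ Real.hasSum_arcsin <| by
        rw [smul_apply, smul_eq_mul, abs_mul, abs_of_pos hr.1]
        exact mul_lt_one_of_nonneg_of_lt_one_left hr.1.le hr.2 (hA1 i j)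
  have hlim : Tendsto (fun r : ℝ ↦ (r • A).map Real.arcsin) (𝓝[<] 1) (𝓝 (A.map Real.arcsin)) := by
    have hcont : Continuous fun r : ℝ ↦ (r • A).map Real.arcsin :=
      (continuous_id.smul continuous_const).matrix_map Real.continuous_arcsin
    simpa using (hcont.tendsto 1).mono_left nhdsWithin_le_nhds
  exact isClosed_setOf_posSemidef.mem_of_tendsto hlim
    (eventually_of_mem (Ioo_mem_nhdsLT one_pos) hscaled)

theorem PosSemidef.sum_mul_mul_nonneg_s7 [Fintype ι] {A : Matrix ι ι ℝ} (hA : A.PosSemidef)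
    (c : ι → ℝ) : 0 ≤ ∑ i, ∑ j, c i * c j * A i j := by
  refine (hA.dotProduct_mulVec_nonneg c).trans_eq ?_
  simp only [dotProduct, mulVec, Finset.mul_sum, star_trivial]
  exact Finset.sum_congr rfl fun i _ ↦ Finset.sum_congr rfl fun j _ ↦ by ring

end Matrix

theorem posSemidef_exp_neg_mul_arccos_inner {E ι : Type*} [NormedAddCommGroup E]
    [InnerProductSpace ℝ E] [Finite ι] {v : ι → E} (hv : ∀ i, ‖v i‖ ≤ 1) {t : ℝ} (ht : 0 ≤ t) :
    (Matrix.of fun i j ↦ Real.exp (-t * Real.arccos ⟪v i, v j⟫_ℝ)).PosSemidef := by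
  have hG : ∀ i j, |Matrix.gram ℝ v i j| ≤ 1 := fun i j ↦
    (abs_real_inner_le_norm _ _).trans (mul_le_one₀ (hv i) (norm_nonneg _) (hv j))
  have hK := (((Matrix.posSemidef_gram ℝ v).map_arcsin hG).smul ht).map_exp.smul
    (Real.exp_pos (-(t * (Real.pi / 2)))).le
  convert hK using 1
  ext i j
  simp only [Matrix.of_apply, Matrix.smul_apply, Matrix.map_apply, Matrix.gram_apply, smul_eq_mul,
    Real.arccos_eq_pi_div_two_sub_arcsin, ← Real.exp_add]
  ring_nf

section SqrtDensity

variable {Ω : Type*} [MeasurableSpace Ω] {μ : Measure Ω} {ρ σ : Ω → ℝ}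

theorem memLp_two_sqrt (hρ : Integrable ρ μ) (hρ0 : 0 ≤ᵐ[μ] ρ) : MemLp (fun x ↦ √(ρ x)) 2 μ :=
  (memLp_two_iff_integrable_sq hρ.aemeasurable.sqrt.aestronglyMeasurable).2 <|
    hρ.congr (hρ0.mono fun _ hx ↦ (Real.sq_sqrt hx).symm)

theorem inner_toLp_sqrt (hρ : Integrable ρ μ) (hρ0 : 0 ≤ᵐ[μ] ρ) (hσ : Integrable σ μ)
    (hσ0 : 0 ≤ᵐ[μ] σ) :
    ⟪(memLp_two_sqrt hρ hρ0).toLp, (memLp_two_sqrt hσ hσ0).toLp⟫_ℝ = ∫ x, √(ρ x * σ x) ∂μ := by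
  rw [L2.inner_def]
  refine integral_congr_ae ?_
  filter_upwards [(memLp_two_sqrt hρ hρ0).coeFn_toLp, (memLp_two_sqrt hσ hσ0).coeFn_toLp, hρ0]
    with x hx hx' hx0
  simp [hx, hx', Real.sqrt_mul hx0, mul_comm]

theorem norm_toLp_sqrt (hρ : Integrable ρ μ) (hρ0 : 0 ≤ᵐ[μ] ρ) :
    ‖(memLp_two_sqrt hρ hρ0).toLp‖ = √(∫ x, ρ x ∂μ) := by
  rw [← Real.sqrt_sq (norm_nonneg _), ← real_inner_self_eq_norm_sq, inner_toLp_sqrt hρ hρ0 hρ hρ0]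
  congr 1
  exact integral_congr_ae (hρ0.mono fun x hx ↦ Real.sqrt_mul_self hx)

end SqrtDensity

theorem persistence_fisher_kernel_pos_def_general
    {Ω : Type*} [MeasurableSpace Ω] (μ : Measure Ω)
    (t : ℝ) (ht : 0 < t)
    (N : ℕ) (ρ : Fin N → Ω → ℝ)
    (h0 : ∀ i x, 0 ≤ ρ i x)
    (h1 : ∀ i, ∫ x, ρ i x ∂μ = 1)
    (c : Fin N → ℝ) :
    0 ≤ ∑ i, ∑ j, c i * c j *
        Real.exp (-t * Real.arccos (∫ x, Real.sqrt (ρ i x * ρ j x) ∂μ)) := by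
  -- A non-integrable function has Bochner integral `0`.
  have hρ : ∀ i, Integrable (ρ i) μ := fun i ↦ .of_integral_ne_zero (by simp [h1 i])
  have hρ0 : ∀ i, 0 ≤ᵐ[μ] ρ i := fun i ↦ .of_forall (h0 i)
  let v i := (memLp_two_sqrt (hρ i) (hρ0 i)).toLp
  have hv : ∀ i, ‖v i‖ ≤ 1 := fun i ↦ by
    rw [norm_toLp_sqrt (hρ i) (hρ0 i), h1 i, Real.sqrt_one]
  have hinner : ∀ i j, ⟪v i, v j⟫_ℝ = ∫ x, √(ρ i x * ρ j x) ∂μ := fun i j ↦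
    inner_toLp_sqrt (hρ i) (hρ0 i) (hρ j) (hρ0 j)
  simpa [hinner] using
    (posSemidef_exp_neg_mul_arccos_inner hv ht.le).sum_mul_mul_nonneg_s7 c

/-- For `t > 0`, the Persistence Fisher kernel
`k_PF(ρ, ρ') = exp (-t * arccos (∫ √(ρ ρ') dμ))` is positive definite on the set of
probability densities on a measure space. -/
theorem persistence_fisher_kernel_pos_def
    {Ω : Type*} [MeasurableSpace Ω] (μ : Measure Ω)
    (t : ℝ) (ht : 0 < t)
    (N : ℕ) (ρ : Fin N → Ω → ℝ)
    (hm : ∀ i, Measurable (ρ i)) (h0 : ∀ i x, 0 ≤ ρ i x)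
    (hi : ∀ i, Integrable (ρ i) μ) (h1 : ∀ i, ∫ x, ρ i x ∂μ = 1)
    (c : Fin N → ℝ) :
    0 ≤ ∑ i, ∑ j, c i * c j *
        Real.exp (-t * Real.arccos (∫ x, Real.sqrt (ρ i x * ρ j x) ∂μ)) :=
  persistence_fisher_kernel_pos_def_general μ t ht N ρ h0 h1 c
end
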